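/- Let β > 0 and 0 < α < 2/(λ₁ + β). Then there exists a real number ρ with ϱ ≤ ρ < 1 such that for every iteration t ≥ 0, ‖K(t) − K_β‖_F ≤ ρᵗ · ‖K(0) − K_β‖_F. -/

import Mathlib

/-!
With `P = AᵀA + βI`, the error `E t = K t - P⁻¹` satisfies `E (t + 1) = (I - αP) E t`. In the
eigenbasis of `AᵀA` the factor `I - αP` is `diag (1 - α (λᵢ + β))`, and orthogonal conjugation
preserves the Frobenius norm, so `E` contracts by `ρ = max |1 - α (λ_d + β)| |1 - α (λ₁ + β)|`.
The step-size bound gives `ρ < 1`, and `ρ ≥ ϱ` because `ϱ = (b - a) / (a + b)` for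
`a = α (λ_d + β)`, `b = α (λ₁ + β)`.
-/

open Matrix Finset

noncomputable def frob {n d : ℕ} (M : Matrix (Fin n) (Fin d) ℝ) : ℝ :=
  Real.sqrt (∑ i, ∑ j, M i j ^ 2)

section Frobenius

variable {m d : ℕ}

lemma frob_eq_sqrt_trace (M : Matrix (Fin m) (Fin d) ℝ) : frob M = √(Mᵀ * M).trace := by
  rw [frob, Finset.sum_comm]
  simp only [Matrix.trace, Matrix.diag, mul_apply, transpose_apply, sq]

lemma frob_orthogonal_mul {U : Matrix (Fin m) (Fin m) ℝ} (hU : Uᵀ * U = 1)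
    (M : Matrix (Fin m) (Fin d) ℝ) : frob (U * M) = frob M := by
  rw [frob_eq_sqrt_trace, frob_eq_sqrt_trace, transpose_mul, Matrix.mul_assoc,
    ← Matrix.mul_assoc Uᵀ, hU, Matrix.one_mul]

lemma frob_diagonal_mul_le {e : Fin m → ℝ} {r : ℝ} (hr : 0 ≤ r) (he : ∀ i, |e i| ≤ r)
    (M : Matrix (Fin m) (Fin d) ℝ) : frob (diagonal e * M) ≤ r * frob M := by
  rw [frob, frob, ← Real.sqrt_sq hr, ← Real.sqrt_mul (sq_nonneg r), Finset.mul_sum]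
  gcongr with i _
  rw [Finset.mul_sum]
  gcongr with j _
  rw [diagonal_mul, mul_pow]
  exact mul_le_mul_of_nonneg_right (sq_le_sq' (abs_le.mp (he i)).1 (abs_le.mp (he i)).2)
    (sq_nonneg _)

lemma frob_conj_diagonal_mul_le {V : Matrix (Fin m) (Fin m) ℝ} (hV : Vᵀ * V = 1)
    {e : Fin m → ℝ} {r : ℝ} (hr : 0 ≤ r) (he : ∀ i, |e i| ≤ r)
    (M : Matrix (Fin m) (Fin d) ℝ) : frob (V * diagonal e * Vᵀ * M) ≤ r * frob M := by
  have hVt : Vᵀᵀ * Vᵀ = 1 := by rw [transpose_transpose]; exact mul_eq_one_comm.mp hV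
  rw [Matrix.mul_assoc, Matrix.mul_assoc, frob_orthogonal_mul hV,
    ← frob_orthogonal_mul hVt M]
  exact frob_diagonal_mul_le hr he _

end Frobenius

section Rate

variable {a b : ℝ}

lemma abs_one_sub_le_max_of_mem_Icc {x : ℝ} (hx : x ∈ Set.Icc a b) :
    |1 - x| ≤ max |1 - a| |1 - b| := by
  rw [abs_le]
  constructor
  · linarith [neg_abs_le (1 - b), le_max_right |1 - a| |1 - b|, hx.2]
  · linarith [le_abs_self (1 - a), le_max_left |1 - a| |1 - b|, hx.1]

lemma max_abs_one_sub_lt_one (ha : 0 < a) (hab : a ≤ b) (hb : b < 2) :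
    max |1 - a| |1 - b| < 1 :=
  max_lt (abs_lt.mpr ⟨by linarith, by linarith⟩) (abs_lt.mpr ⟨by linarith, by linarith⟩)

lemma sub_div_add_le_max_abs_one_sub (ha : 0 < a) (hb : 0 ≤ b) :
    (b - a) / (a + b) ≤ max |1 - a| |1 - b| := by
  set ρ := max |1 - a| |1 - b|
  have hρa : 1 - a ≤ ρ := (le_abs_self _).trans (le_max_left _ _)
  have hρb : b - 1 ≤ ρ := (abs_sub_comm 1 b ▸ le_abs_self (b - 1)).trans (le_max_right _ _)
  rw [div_le_iff₀ (by linarith)]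
  -- `b - a = b (1 - a) + a (b - 1)`
  linarith [mul_le_mul_of_nonneg_left hρa hb, mul_le_mul_of_nonneg_left hρb ha.le]

end Rate

lemma sub_smul_residual_sub_eq_mul {𝕜 R : Type*} [CommRing 𝕜] [Ring R] [Algebra 𝕜 R] {P Q : R}
    (hPQ : P * Q = 1) (α : 𝕜) (K : R) :
    K - α • (P * K - 1) - Q = (1 - α • P) * (K - Q) := by
  rw [mul_sub, sub_mul, sub_mul, one_mul, one_mul, smul_mul_assoc, smul_mul_assoc, hPQ, smul_sub]
  abel

section Spectral

variable {ι : Type*} [Fintype ι] [DecidableEq ι]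

lemma one_sub_smul_conj_diagonal_add_smul_one {V : Matrix ι ι ℝ} (hV : V * Vᵀ = 1)
    (lam : ι → ℝ) (α β : ℝ) :
    1 - α • (V * diagonal lam * Vᵀ + β • 1) =
      V * diagonal (fun i => 1 - α * (lam i + β)) * Vᵀ := by
  have : diagonal (fun i => 1 - α * (lam i + β)) = 1 - α • (diagonal lam + β • 1) := by
    ext i j
    rcases eq_or_ne i j with rfl | h <;> simp [one_apply, mul_add, *]
  rw [this]
  simp only [Matrix.mul_sub, Matrix.sub_mul, Matrix.mul_smul, Matrix.smul_mul, Matrix.mul_add,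
    Matrix.add_mul, Matrix.mul_one, hV]

lemma nonneg_of_transpose_mul_self_eq_conj_diagonal {n : Type*} [Fintype n]
    {A : Matrix n ι ℝ} {V : Matrix ι ι ℝ} {lam : ι → ℝ} (hV : Vᵀ * V = 1)
    (h : Aᵀ * A = V * diagonal lam * Vᵀ) (i : ι) : 0 ≤ lam i := by
  have hD : diagonal lam = (A * V)ᴴ * (A * V) := by
    rw [conjTranspose_eq_transpose_of_trivial, transpose_mul, Matrix.mul_assoc,
      ← Matrix.mul_assoc Aᵀ, h]
    simp only [Matrix.mul_assoc, hV, Matrix.mul_one, ← Matrix.mul_assoc Vᵀ V, Matrix.one_mul]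
  exact posSemidef_diagonal_iff.mp (hD ▸ posSemidef_conjTranspose_mul_self _) i

end Spectral

/-- linear convergence of the iterative pre-conditioner matrix `K(t)`
to `K_β = (AᵀA + βI)⁻¹` in the Frobenius norm, with rate `ρ ∈ [ϱ, 1)`. -/
theorem ipg_preconditioner_frobenius_contraction
    (n d : ℕ) (hd : 0 < d)
    (A : Matrix (Fin n) (Fin d) ℝ)
    (lam : Fin d → ℝ) (V : Matrix (Fin d) (Fin d) ℝ)
    (hV : Vᵀ * V = 1)
    (hdiag : Aᵀ * A = V * Matrix.diagonal lam * Vᵀ)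
    (hanti : Antitone lam)
    (α β : ℝ) (hβ : 0 < β)
    (hα0 : 0 < α) (hα : α < 2 / (lam ⟨0, hd⟩ + β))
    (K : ℕ → Matrix (Fin d) (Fin d) ℝ)
    (hK : ∀ t, K (t + 1) = K t - α • ((Aᵀ * A + β • 1) * K t - 1)) :
    ∃ ρ : ℝ,
      (lam ⟨0, hd⟩ - lam ⟨d - 1, by omega⟩) /
          (lam ⟨0, hd⟩ + lam ⟨d - 1, by omega⟩ + 2 * β) ≤ ρ ∧
      ρ < 1 ∧
      ∀ t : ℕ,
        frob (K t - (Aᵀ * A + β • 1)⁻¹) ≤ ρ ^ t * frob (K 0 - (Aᵀ * A + β • 1)⁻¹) := by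
  set P := Aᵀ * A + β • (1 : Matrix (Fin d) (Fin d) ℝ)
  have hlam := nonneg_of_transpose_mul_self_eq_conj_diagonal hV hdiag
  have hPdef : P.PosDef := by
    refine PosDef.posSemidef_add ?_ (PosDef.one.smul hβ)
    simpa only [conjTranspose_eq_transpose_of_trivial] using posSemidef_conjTranspose_mul_self A
  have hPinv : P * P⁻¹ = 1 := P.mul_nonsing_inv (P.isUnit_iff_isUnit_det.mp hPdef.isUnit)
  have hstep : 1 - α • P = V * diagonal (fun i => 1 - α * (lam i + β)) * Vᵀ := by
    simp only [P, hdiag]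
    exact one_sub_smul_conj_diagonal_add_smul_one (mul_eq_one_comm.mp hV) lam α β
  set a := α * (lam ⟨d - 1, by omega⟩ + β)
  set b := α * (lam ⟨0, hd⟩ + β)
  have hmem (i : Fin d) : α * (lam i + β) ∈ Set.Icc a b := by
    have hlo : lam ⟨d - 1, by omega⟩ ≤ lam i := hanti (Fin.le_def.mpr (by simp only; omega))
    have hhi : lam i ≤ lam ⟨0, hd⟩ := hanti (Fin.le_def.mpr (Nat.zero_le _))
    exact ⟨by simp only [a]; gcongr, by simp only [b]; gcongr⟩
  have ha : 0 < a := by have := hlam ⟨d - 1, by omega⟩; positivity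
  have hab : a ≤ b := (hmem ⟨d - 1, by omega⟩).2
  have hb : b < 2 := by
    have := hlam ⟨0, hd⟩
    rwa [lt_div_iff₀ (by positivity)] at hα
  set ρ := max |1 - a| |1 - b|
  refine ⟨ρ, ?_, max_abs_one_sub_lt_one ha hab hb, fun t => ?_⟩
  · convert sub_div_add_le_max_abs_one_sub ha (ha.le.trans hab) using 1
    simp only [a, b]
    rw [← mul_div_mul_left (lam ⟨0, hd⟩ - lam ⟨d - 1, by omega⟩) _ hα0.ne']
    congr 1 <;> ring
  · have hρ : 0 ≤ ρ := (abs_nonneg _).trans (le_max_left _ _)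
    refine le_geom (u := fun t => frob (K t - P⁻¹)) hρ t fun k _ => ?_
    rw [hK, sub_smul_residual_sub_eq_mul hPinv, hstep]
    exact frob_conj_diagonal_mul_le hV hρ (fun i => abs_one_sub_le_max_of_mem_Icc (hmem i)) _
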